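/- Let J_n ∈ ℝ^{n×n} denote the exchange matrix (ones on the anti-diagonal, zeros elsewhere). Let A ∈ ℂ^{n×n} be centrosymmetric, i.e., A J_n = J_n A, with Moore–Penrose pseudoinverse A†, and let S ⊆ {1,…,n}×{1,…,n} be a sparsity pattern invariant under the map (i,j) ↦ (n+1−i, n+1−j). If X ∈ F(A,S) satisfies J(X;A) ≤ J(Y;A) for all Y ∈ F(A,S) (i.e., X is a minimizer of the sparsification problem), then X is centrosymmetric: X J_n = J_n X. -/

import Mathlib

open scoped Matrix

/-- `B` is the Moore–Penrose pseudoinverse of `A`. -/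
def IsMPInv {m n : ℕ} (A : Matrix (Fin m) (Fin n) ℂ) (B : Matrix (Fin n) (Fin m) ℂ) : Prop :=
  A * B * A = A ∧ B * A * B = B ∧ (A * B)ᴴ = A * B ∧ (B * A)ᴴ = B * A

/-- Squared Frobenius norm. -/
noncomputable def frobSq {m n : ℕ} (M : Matrix (Fin m) (Fin n) ℂ) : ℝ :=
  ∑ i, ∑ j, ‖M i j‖ ^ 2

/-- The misfit functional `J(X;A) = ½‖(X-A)A†‖_F² + ½‖A†(X-A)‖_F²`,
with the pseudoinverse `Ad` of `A` given explicitly. -/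
noncomputable def Jmis {m n : ℕ} (X A : Matrix (Fin m) (Fin n) ℂ)
    (Ad : Matrix (Fin n) (Fin m) ℂ) : ℝ :=
  (1 / 2) * frobSq ((X - A) * Ad) + (1 / 2) * frobSq (Ad * (X - A))

/-- The feasible set `F(A,S)`: the null space of `A` is contained in that of `X`,
the null space of `A*` in that of `X*`, and `X` vanishes outside the pattern `S`. -/
def Feasible {m n : ℕ} (A X : Matrix (Fin m) (Fin n) ℂ) (S : Set (Fin m × Fin n)) : Prop :=
  (∀ v : Fin n → ℂ, A.mulVec v = 0 → X.mulVec v = 0) ∧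
  (∀ v : Fin m → ℂ, Aᴴ.mulVec v = 0 → Xᴴ.mulVec v = 0) ∧
  (∀ ij : Fin m × Fin n, ij ∉ S → X ij.1 ij.2 = 0)

/-- The exchange matrix `J_n`: ones on the anti-diagonal, zeros elsewhere. -/
def exchangeMatrix (n : ℕ) : Matrix (Fin n) (Fin n) ℂ :=
  Matrix.of fun i j => if j = i.rev then 1 else 0

open Matrix

/-! Conjugation by the exchange matrix is the reflection `M ↦ M.submatrix rev rev`. Since `A` is
centrosymmetric and the Moore–Penrose inverse is unique, `A†` is centrosymmetric as well, so the
reflection `X'` of `X` is again feasible and has the same misfit. By the parallelogram law the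
midpoint of `X` and `X'` has misfit smaller by `⅛ (‖(X - X')A†‖² + ‖A†(X - X')‖²)`, so minimality
forces `(X - X')A† = 0`; as `ker A ⊆ ker (X - X')`, this gives `X = X'`. -/

lemma submatrix_mulVec_eq_zero_iff {α k l k' l' : Type*} [NonUnitalNonAssocSemiring α]
    [Fintype l] [Fintype l'] (M : Matrix k l α) (e : k' ≃ k) (f : l' ≃ l) (v : l' → α) :
    M.submatrix e f *ᵥ v = 0 ↔ M *ᵥ (v ∘ f.symm) = 0 := by
  rw [submatrix_mulVec_equiv]
  exact e.surjective.injective_comp_right.eq_iff (b := (0 : k → α))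

section Exchange

variable {n : ℕ}

lemma mul_exchangeMatrix_apply (M : Matrix (Fin n) (Fin n) ℂ) (i j : Fin n) :
    (M * exchangeMatrix n) i j = M i j.rev := by
  simp [exchangeMatrix, mul_apply, eq_comm (a := j), Fin.rev_eq_iff]

lemma exchangeMatrix_mul_apply (M : Matrix (Fin n) (Fin n) ℂ) (i j : Fin n) :
    (exchangeMatrix n * M) i j = M i.rev j := by
  simp [exchangeMatrix, mul_apply]

lemma mul_exchangeMatrix_eq_exchangeMatrix_mul_iff (M : Matrix (Fin n) (Fin n) ℂ) :
    M * exchangeMatrix n = exchangeMatrix n * M ↔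
      M.submatrix Fin.revPerm Fin.revPerm = M := by
  simp only [← Matrix.ext_iff, mul_exchangeMatrix_apply, exchangeMatrix_mul_apply,
    submatrix_apply, Fin.revPerm_apply]
  constructor <;> intro h i j <;> rw [← h, Fin.rev_rev]

end Exchange

section PseudoInverse

variable {m n : ℕ}

theorem IsMPInv.unique {A : Matrix (Fin m) (Fin n) ℂ} {B C : Matrix (Fin n) (Fin m) ℂ}
    (hB : IsMPInv A B) (hC : IsMPInv A C) : B = C := by
  obtain ⟨hB1, hB2, hB3, hB4⟩ := hB
  obtain ⟨hC1, hC2, hC3, hC4⟩ := hC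
  have hAB : A * B = A * C :=
    calc A * B = (A * C * A) * B := by rw [hC1]
      _ = (A * C)ᴴ * (A * B)ᴴ := by rw [hC3, hB3, Matrix.mul_assoc]
      _ = (A * B * A * C)ᴴ := by simp only [← conjTranspose_mul, Matrix.mul_assoc]
      _ = A * C := by rw [hB1, hC3]
  have hBA : B * A = C * A :=
    calc B * A = B * (A * C * A) := by rw [hC1]
      _ = (B * A)ᴴ * (C * A)ᴴ := by rw [hB4, hC4]; simp only [Matrix.mul_assoc]
      _ = (C * (A * B * A))ᴴ := by simp only [← conjTranspose_mul, Matrix.mul_assoc]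
      _ = C * A := by rw [hB1, hC4]
  calc B = B * A * B := hB2.symm
    _ = C * A * C := by rw [hBA, Matrix.mul_assoc, hAB, Matrix.mul_assoc]
    _ = C := hC2

theorem IsMPInv.submatrix {A : Matrix (Fin m) (Fin n) ℂ} {B : Matrix (Fin n) (Fin m) ℂ}
    (h : IsMPInv A B) (e : Fin m ≃ Fin m) (f : Fin n ≃ Fin n) :
    IsMPInv (A.submatrix e f) (B.submatrix f e) := by
  obtain ⟨h1, h2, h3, h4⟩ := h
  refine ⟨?_, ?_, ?_, ?_⟩ <;>
    simp only [submatrix_mul_equiv, conjTranspose_submatrix, h1, h2, h3, h4]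

theorem eq_zero_of_ker_le_of_mul_eq_zero {α k l : Type*} [Ring α] [Fintype k] [Fintype l]
    [DecidableEq l] {A : Matrix k l α} {B : Matrix l k α} (hB : A * B * A = A)
    {D : Matrix k l α}
    (hker : ∀ v, A *ᵥ v = 0 → D *ᵥ v = 0) (hDB : D * B = 0) : D = 0 := by
  refine Matrix.ext_iff_mulVec.2 fun v => ?_
  have hproj : A *ᵥ (v - (B * A) *ᵥ v) = 0 := by
    rw [mulVec_sub, mulVec_mulVec, ← Matrix.mul_assoc, hB, sub_self]
  calc D *ᵥ v = D *ᵥ ((B * A) *ᵥ v) + D *ᵥ (v - (B * A) *ᵥ v) := by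
        rw [← mulVec_add, add_sub_cancel]
    _ = 0 *ᵥ v := by
        rw [hker _ hproj, mulVec_mulVec, ← Matrix.mul_assoc, hDB, Matrix.zero_mul, add_zero]

end PseudoInverse

section Frobenius

variable {m n : ℕ}

lemma frobSq_nonneg (M : Matrix (Fin m) (Fin n) ℂ) : 0 ≤ frobSq M := by
  unfold frobSq
  positivity

lemma frobSq_eq_zero_iff (M : Matrix (Fin m) (Fin n) ℂ) : frobSq M = 0 ↔ M = 0 := by
  simp only [frobSq, ← Matrix.ext_iff, Matrix.zero_apply]
  rw [Finset.sum_eq_zero_iff_of_nonneg fun i _ => by positivity]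
  refine forall_congr' fun i => ?_
  rw [Finset.sum_eq_zero_iff_of_nonneg fun j _ => by positivity]
  simp

lemma frobSq_smul (c : ℂ) (M : Matrix (Fin m) (Fin n) ℂ) : frobSq (c • M) = ‖c‖ ^ 2 * frobSq M := by
  simp only [frobSq, Matrix.smul_apply, smul_eq_mul, norm_mul, mul_pow, Finset.mul_sum]

lemma frobSq_add_add_frobSq_sub (P Q : Matrix (Fin m) (Fin n) ℂ) :
    frobSq (P + Q) + frobSq (P - Q) = 2 * (frobSq P + frobSq Q) := by
  simp only [frobSq, Matrix.add_apply, Matrix.sub_apply, ← Finset.sum_add_distrib, Finset.mul_sum,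
    parallelogram_law_with_norm ℂ]

lemma frobSq_submatrix (M : Matrix (Fin m) (Fin n) ℂ) (e : Fin m ≃ Fin m) (f : Fin n ≃ Fin n) :
    frobSq (M.submatrix e f) = frobSq M :=
  Fintype.sum_equiv e _ _ fun _ => Fintype.sum_equiv f _ _ fun _ => rfl

lemma Jmis_submatrix (X A : Matrix (Fin m) (Fin n) ℂ) (Ad : Matrix (Fin n) (Fin m) ℂ)
    (e : Fin m ≃ Fin m) (f : Fin n ≃ Fin n) :
    Jmis (X.submatrix e f) (A.submatrix e f) (Ad.submatrix f e) = Jmis X A Ad := by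
  have hsub : X.submatrix e f - A.submatrix e f = (X - A).submatrix e f := rfl
  simp only [Jmis, hsub, submatrix_mul_equiv, frobSq_submatrix]

lemma Jmis_midpoint (X Y A : Matrix (Fin m) (Fin n) ℂ) (Ad : Matrix (Fin n) (Fin m) ℂ) :
    Jmis ((2⁻¹ : ℂ) • (X + Y)) A Ad = (Jmis X A Ad + Jmis Y A Ad) / 2 -
      (frobSq ((X - Y) * Ad) + frobSq (Ad * (X - Y))) / 8 := by
  have hmid : (2⁻¹ : ℂ) • (X + Y) - A = (2⁻¹ : ℂ) • ((X - A) + (Y - A)) := by module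
  have hdiff : X - Y = (X - A) - (Y - A) := (sub_sub_sub_cancel_right X Y A).symm
  have h₁ := frobSq_add_add_frobSq_sub ((X - A) * Ad) ((Y - A) * Ad)
  have h₂ := frobSq_add_add_frobSq_sub (Ad * (X - A)) (Ad * (Y - A))
  rw [← Matrix.sub_mul, ← hdiff] at h₁
  rw [← Matrix.mul_sub, ← hdiff] at h₂
  rw [Jmis, hmid, Matrix.smul_mul, Matrix.mul_smul, frobSq_smul, frobSq_smul, Matrix.add_mul,
    Matrix.mul_add, Jmis, Jmis]
  norm_num
  linarith

end Frobenius

section Feasible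

variable {m n : ℕ} {A X Y : Matrix (Fin m) (Fin n) ℂ} {S : Set (Fin m × Fin n)}

theorem Feasible.add (hX : Feasible A X S) (hY : Feasible A Y S) : Feasible A (X + Y) S :=
  ⟨fun v hv => by rw [add_mulVec, hX.1 v hv, hY.1 v hv, add_zero],
   fun v hv => by rw [conjTranspose_add, add_mulVec, hX.2.1 v hv, hY.2.1 v hv, add_zero],
   fun ij hij => by rw [Matrix.add_apply, hX.2.2 ij hij, hY.2.2 ij hij, add_zero]⟩

theorem Feasible.smul (hX : Feasible A X S) (c : ℂ) : Feasible A (c • X) S :=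
  ⟨fun v hv => by rw [smul_mulVec, hX.1 v hv, smul_zero],
   fun v hv => by rw [conjTranspose_smul, smul_mulVec, hX.2.1 v hv, smul_zero],
   fun ij hij => by rw [Matrix.smul_apply, hX.2.2 ij hij, smul_zero]⟩

theorem Feasible.submatrix (h : Feasible A X S) (e : Fin m ≃ Fin m) (f : Fin n ≃ Fin n) :
    Feasible (A.submatrix e f) (X.submatrix e f) (Prod.map e f ⁻¹' S) := by
  refine ⟨fun v hv => ?_, fun v hv => ?_, fun ij hij => h.2.2 _ hij⟩
  · rw [submatrix_mulVec_eq_zero_iff] at hv ⊢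
    exact h.1 _ hv
  · rw [conjTranspose_submatrix, submatrix_mulVec_eq_zero_iff] at hv ⊢
    exact h.2.1 _ hv

end Feasible

/-- if `A` is centrosymmetric (`A Jₙ = Jₙ A`), the pattern `S` is invariant
under `(i,j) ↦ (n+1-i, n+1-j)`, and `X` minimizes the misfit over `F(A,S)`, then `X` is
centrosymmetric. -/
theorem stmt19 {n : ℕ} (A X Ad : Matrix (Fin n) (Fin n) ℂ)
    (hA : A * exchangeMatrix n = exchangeMatrix n * A) (hMP : IsMPInv A Ad)
    (S : Set (Fin n × Fin n))
    (hS : ∀ i j : Fin n, (i, j) ∈ S ↔ (i.rev, j.rev) ∈ S)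
    (hXfeas : Feasible A X S)
    (hXmin : ∀ Y, Feasible A Y S → Jmis X A Ad ≤ Jmis Y A Ad) :
    X * exchangeMatrix n = exchangeMatrix n * X := by
  have hAc : A.submatrix Fin.revPerm Fin.revPerm = A := (mul_exchangeMatrix_eq_exchangeMatrix_mul_iff A).1 hA
  have hAdc : Ad.submatrix Fin.revPerm Fin.revPerm = Ad := by
    refine IsMPInv.unique ?_ hMP
    simpa only [hAc] using hMP.submatrix Fin.revPerm Fin.revPerm
  have hSc : Prod.map Fin.revPerm Fin.revPerm ⁻¹' S = S :=
    Set.ext fun ij => (hS ij.1 ij.2).symm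
  set Xr := X.submatrix Fin.revPerm Fin.revPerm
  have hXr : Feasible A Xr S := by
    simpa only [hAc, hSc] using hXfeas.submatrix Fin.revPerm Fin.revPerm
  have hJr : Jmis Xr A Ad = Jmis X A Ad := by
    simpa only [hAc, hAdc] using Jmis_submatrix X A Ad Fin.revPerm Fin.revPerm
  have hmin := hXmin _ ((hXfeas.add hXr).smul 2⁻¹)
  rw [Jmis_midpoint, hJr] at hmin
  have hD : (X - Xr) * Ad = 0 := (frobSq_eq_zero_iff _).1 <| by
    linarith [frobSq_nonneg ((X - Xr) * Ad), frobSq_nonneg (Ad * (X - Xr))]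
  have hker : ∀ v, A *ᵥ v = 0 → (X - Xr) *ᵥ v = 0 := fun v hv => by
    rw [sub_mulVec, hXfeas.1 v hv, hXr.1 v hv, sub_self]
  exact (mul_exchangeMatrix_eq_exchangeMatrix_mul_iff X).2
    (sub_eq_zero.1 (eq_zero_of_ker_le_of_mul_eq_zero hMP.1 hker hD)).symm
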